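/- (Theorem 7(B),(C)) Let 2 ≤ k ≤ n and suppose the k-clique function f_{n,k} is written in disjunctive normal form: there is a family of terms T_{P_j,N_j}, indexed by j ∈ J, with each P_j, N_j disjoint, such that for every edge assignment x, f_{n,k}(x) = true iff x satisfies T_{P_j,N_j} for some j ∈ J. Then for every k-element subset S of Fin n there exists an index j ∈ J whose term's positive literal set is exactly the set of edges within S (P_j = {edges within S}) and whose negative literal set contains no edge within S (N_j ∩ {edges within S} = ∅). -/

import Mathlib

/-- An edge on the vertex set `Fin n`: an unordered pair of distinct vertices. -/
abbrev Edge (n : ℕ) := {e : Sym2 (Fin n) // ¬ e.IsDiag}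

/-- The `k`-clique Boolean function on edge assignments: `true` iff there is a
`k`-element vertex set all of whose internal edges are present. -/
def cliqueFun (n k : ℕ) (x : Edge n → Bool) : Bool :=
  decide (∃ S : Finset (Fin n), S.card = k ∧
    ∀ e : Edge n, (e : Sym2 (Fin n)) ∈ S.sym2 → x e = true)

/-- The set of edges with both endpoints in `S`. -/
def edgesIn (n : ℕ) (S : Finset (Fin n)) : Finset (Edge n) :=
  Finset.univ.filter (fun e => (e : Sym2 (Fin n)) ∈ S.sym2)

/-- Restriction of `cliqueFun` to the edge variables in `X`, obtained by setting
all edge variables outside `X` to `false`. -/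
def cliqueRestrict (n k : ℕ) (X : Finset (Edge n)) (x : {e : Edge n // e ∈ X} → Bool) : Bool :=
  cliqueFun n k (fun e => if h : e ∈ X then x ⟨e, h⟩ else false)

/-- The permutation of edges induced by a relabeling of the vertices,
sending the edge `{i, j}` to `{σ i, σ j}`. -/
def edgePerm {n : ℕ} (σ : Equiv.Perm (Fin n)) : Equiv.Perm (Edge n) where
  toFun e := ⟨Sym2.map σ e.1, fun h => e.2 ((Sym2.isDiag_map σ.injective).mp h)⟩
  invFun e := ⟨Sym2.map σ.symm e.1, fun h => e.2 ((Sym2.isDiag_map σ.symm.injective).mp h)⟩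
  left_inv e := Subtype.ext (by simp [Sym2.map_map])
  right_inv e := Subtype.ext (by simp [Sym2.map_map])

/-! The indicator of the edges within `S` is a clique, so some term `T_{P,N}` of the
DNF is satisfied by it, giving `P ⊆ edgesIn S` and `N ∩ edgesIn S = ∅`. If `P` were a proper
subset, the indicator of `P` itself would satisfy the same term, hence contain a `k`-clique `T`;
as `k ≥ 2` every vertex of `T` lies on an edge of `T`, so `T ⊆ S`, thus `T = S` and all edges
within `S` would be in `P`. -/

lemma term_satisfied_by_indicator_iff {α : Type*} [DecidableEq α] (P N E : Finset α) :
    ((∀ a ∈ P, decide (a ∈ E) = true) ∧ ∀ a ∈ N, decide (a ∈ E) = false) ↔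
      P ⊆ E ∧ Disjoint N E := by
  simp only [decide_eq_true_eq, decide_eq_false_iff_not, Finset.disjoint_left]
  rfl

lemma mem_edgesIn {n : ℕ} {S : Finset (Fin n)} {e : Edge n} :
    e ∈ edgesIn n S ↔ (e : Sym2 (Fin n)) ∈ S.sym2 := by
  simp [edgesIn]

lemma cliqueFun_indicator_eq_true_iff (n k : ℕ) (E : Finset (Edge n)) :
    cliqueFun n k (fun e => decide (e ∈ E)) = true ↔
      ∃ T : Finset (Fin n), T.card = k ∧ edgesIn n T ⊆ E := by
  simp only [cliqueFun, decide_eq_true_eq, Finset.subset_iff, mem_edgesIn]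

lemma subset_of_edgesIn_subset {n : ℕ} {S T : Finset (Fin n)} (hT : 1 < T.card)
    (h : edgesIn n T ⊆ edgesIn n S) : T ⊆ S := by
  intro v hv
  obtain ⟨w, hw, hwv⟩ := Finset.exists_mem_ne hT v
  have hvw : ¬ (s(v, w)).IsDiag := by simpa using hwv.symm
  have hedge : (⟨s(v, w), hvw⟩ : Edge n) ∈ edgesIn n T := by
    simp [mem_edgesIn, hv, hw]
  exact (Finset.mk_mem_sym2_iff.mp (mem_edgesIn.mp (h hedge))).1

lemma cliqueFun_indicator_eq_false_of_ssubset_edgesIn {n k : ℕ} (hk : 2 ≤ k)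
    {S : Finset (Fin n)} (hS : S.card = k) {E : Finset (Edge n)} (hE : E ⊂ edgesIn n S) :
    cliqueFun n k (fun e => decide (e ∈ E)) = false := by
  rw [← Bool.not_eq_true, cliqueFun_indicator_eq_true_iff]
  rintro ⟨T, hT, hTE⟩
  have hTS : T ⊆ S := subset_of_edgesIn_subset (by omega) (hTE.trans hE.subset)
  have hTeq : T = S := Finset.eq_of_subset_of_card_le hTS (by omega)
  exact hE.not_subset (hTeq ▸ hTE)

theorem dnf_clause_for_each_clique_general (n k : ℕ) (hk : 2 ≤ k)
    {J : Type*} (P N : J → Finset (Edge n))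
    (hdnf : ∀ x : Edge n → Bool,
      cliqueFun n k x = true ↔
        ∃ j : J, (∀ e ∈ P j, x e = true) ∧ (∀ e ∈ N j, x e = false)) :
    ∀ S : Finset (Fin n), S.card = k →
      ∃ j : J, P j = edgesIn n S ∧ ∀ e ∈ N j, e ∉ edgesIn n S := by
  intro S hS
  have hclique : cliqueFun n k (fun e => decide (e ∈ edgesIn n S)) = true :=
    (cliqueFun_indicator_eq_true_iff n k _).mpr ⟨S, hS, le_rfl⟩
  obtain ⟨j, hj⟩ := (hdnf _).mp hclique
  obtain ⟨hPS, hNS⟩ := (term_satisfied_by_indicator_iff _ _ _).mp hj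
  refine ⟨j, ?_, fun e he => Finset.disjoint_left.mp hNS he⟩
  by_contra hne
  have hPj : cliqueFun n k (fun e => decide (e ∈ P j)) = true :=
    (hdnf _).mpr ⟨j, (term_satisfied_by_indicator_iff _ _ _).mpr
      ⟨le_rfl, hNS.mono_right hPS⟩⟩
  rw [cliqueFun_indicator_eq_false_of_ssubset_edgesIn hk hS (hPS.ssubset_of_ne hne)] at hPj
  exact Bool.false_ne_true hPj

/-- Theorem 7(B),(C): in any disjunctive normal form of the
`k`-clique function (`2 ≤ k ≤ n`), for every `k`-element vertex set `S` there
is a clause whose positive literal set is exactly the set of edges within `S`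
and whose negative literal set contains no edge within `S`. -/
theorem dnf_clause_for_each_clique (n k : ℕ) (hk : 2 ≤ k) (hkn : k ≤ n)
    {J : Type*} (P N : J → Finset (Edge n)) (hPN : ∀ j, Disjoint (P j) (N j))
    (hdnf : ∀ x : Edge n → Bool,
      cliqueFun n k x = true ↔
        ∃ j : J, (∀ e ∈ P j, x e = true) ∧ (∀ e ∈ N j, x e = false)) :
    ∀ S : Finset (Fin n), S.card = k →
      ∃ j : J, P j = edgesIn n S ∧ ∀ e ∈ N j, e ∉ edgesIn n S :=
  dnf_clause_for_each_clique_general n k hk P N hdnf
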